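/- arXiv:1003.0929 — 2 statements merged into one kernel-verified Lean document; each statement's English description precedes it below -/
import Mathlib

section
/- Fix the sets ℰ, ℱ and the parameters μ ∈ (0,1)^ℱ, ν ∈ (0,∞)^ℱ, and suppose the system is critically loaded (Leff(ρ) = 1). There exists a function β : (0,∞)\{1} → ℝ₊, depending only on μ, ν, |ℰ| and |ℱ|, with β(α) → 0 as α → 0⁺, such that for every α ∈ (0,∞)\{1} and every fixed point (n*, q*) of the lifting map (Δ(n*, q*) = (n*, q*)), one has c(n*, q*) ≤ (1 + β(α)) c*(n*, q*). -/
open Matrix Filter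

/-- Network data: queues `E`, flow types `F`, routing matrix, schedule set,
ingress map, arrival/departure parameters. -/
structure Network (E F : Type*) [Fintype E] [Fintype F] [DecidableEq E] where
  R : Matrix E E ℝ
  S : Finset (E → ℝ)
  iota : F → E
  ν : F → ℝ
  μ : F → ℝ
  C : ℝ
  hR01 : ∀ e e', R e e' = 0 ∨ R e e' = 1
  hRrow : ∀ e e₁ e₂, R e e₁ ≠ 0 → R e e₂ ≠ 0 → e₁ = e₂
  hRnil : IsNilpotent R
  hS01 : ∀ σ ∈ S, ∀ e, σ e = 0 ∨ σ e = 1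
  hS0 : (0 : E → ℝ) ∈ S
  hSmono : ∀ σ ∈ S, ∀ σ' : E → ℝ, (∀ e, σ' e = 0 ∨ σ' e = 1) → (∀ e, σ' e ≤ σ e) → σ' ∈ S
  hSsingle : ∀ e : E, (fun e' => if e' = e then (1 : ℝ) else 0) ∈ S
  hν : ∀ f, 0 < ν f
  hμ0 : ∀ f, 0 < μ f
  hμ1 : ∀ f, μ f < 1
  hC : ∀ f, ν f / μ f < C

namespace Network

variable {E F : Type*} [Fintype E] [Fintype F] [DecidableEq E] (N : Network E F)

/-- offered load `ρ_f = ν_f / μ_f`. -/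
noncomputable def rho : F → ℝ := fun f => N.ν f / N.μ f

/-- `Ξ = (I - Rᵀ)⁻¹`. -/
noncomputable def Xi : Matrix E E ℝ := (1 - N.R.transpose)⁻¹

/-- ingress matrix `Γ`. -/
noncomputable def Gam : Matrix E F ℝ := Matrix.of fun e f => if N.iota f = e then (1 : ℝ) else 0

/-- implied load `λ = Ξ Γ ρ`. -/
noncomputable def lamv : E → ℝ := N.Xi *ᵥ (N.Gam *ᵥ N.rho)

/-- `Π s`, the vector of service rates induced by schedule weights `s`. -/
def PiV (s : (E → ℝ) → ℝ) : E → ℝ := fun e => ∑ σ ∈ N.S, s σ * σ e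

/-- the primal LP value `PRIMAL(l)`. -/
noncomputable def PRIMAL (l : E → ℝ) : ℝ :=
  sInf { v | ∃ s : (E → ℝ) → ℝ, (∀ σ, 0 ≤ s σ) ∧ (∀ e, l e ≤ N.PiV s e) ∧
    v = ∑ σ ∈ N.S, s σ }

/-- effective load `Leff(ρ) = PRIMAL(ΞΓρ)`. -/
noncomputable def Leff : ℝ := N.PRIMAL N.lamv

/-- feasibility for the dual LP. -/
def dualFeasible (ζ : E → ℝ) : Prop :=
  (∀ e, 0 ≤ ζ e) ∧ ∀ σ ∈ N.S, ∑ e, ζ e * σ e ≤ 1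

/-- the dual LP value `DUAL(l)`. -/
noncomputable def DUAL (l : E → ℝ) : ℝ :=
  sSup { v | ∃ ζ : E → ℝ, N.dualFeasible ζ ∧ v = ∑ e, l e * ζ e }

/-- `CR(ρ)`: the critical virtual resources (optimal solutions of `DUAL(ΞΓρ)`). -/
def CR : Set (E → ℝ) :=
  { ζ | N.dualFeasible ζ ∧ ∑ e, N.lamv e * ζ e = N.DUAL N.lamv }

/-- `CR*(ρ)`: extreme points of `CR(ρ)`. -/
noncomputable def CRstar : Set (E → ℝ) := Set.extremePoints ℝ N.CR

/-- workload `w_ζ(n,q) = ζᵀ Ξ [q + Γ diag(μ)⁻¹ n]`. -/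
noncomputable def workload (ζ : E → ℝ) (n : F → ℝ) (q : E → ℝ) : ℝ :=
  ∑ e, ζ e * (N.Xi *ᵥ (q + N.Gam *ᵥ fun f => n f / N.μ f)) e

/-- cost `c(n,q) = Σ_f n_f/μ_f + Σ_e q_e`. -/
noncomputable def cost (n : F → ℝ) (q : E → ℝ) : ℝ :=
  ∑ f, n f / N.μ f + ∑ e, q e

/-- Lyapunov function `L_α(n,q)`. -/
noncomputable def Lyap (α : ℝ) (n : F → ℝ) (q : E → ℝ) : ℝ :=
  ∑ f, n f ^ (1 + α) / (N.μ f * N.rho f ^ α) + ∑ e, q e ^ (1 + α)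

/-- back-pressure weight of a schedule `σ`: `σᵀ (I - R) q^α`. -/
noncomputable def weight (α : ℝ) (q : E → ℝ) (σ : E → ℝ) : ℝ :=
  ∑ e, σ e * ((1 - N.R) *ᵥ fun e' => q e' ^ α) e

theorem S_nonempty : N.S.Nonempty := ⟨0, N.hS0⟩

/-- the maximum back-pressure weight. -/
noncomputable def maxWeight (α : ℝ) (q : E → ℝ) : ℝ :=
  N.S.sup' N.S_nonempty (N.weight α q)

/-- feasibility for problem `bALGD(n,q)`. -/
def bALGDFeas (n : F → ℝ) (q : E → ℝ) (p : (F → ℝ) × (E → ℝ)) : Prop :=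
  (∀ f, 0 ≤ p.1 f) ∧ (∀ e, 0 ≤ p.2 e) ∧
    ∀ ζ ∈ N.CRstar, N.workload ζ n q ≤ N.workload ζ p.1 p.2

/-- optimality for problem `bALGD(n,q)`. -/
def bALGDOpt (α : ℝ) (n : F → ℝ) (q : E → ℝ) (p : (F → ℝ) × (E → ℝ)) : Prop :=
  N.bALGDFeas n q p ∧ ∀ p', N.bALGDFeas n q p' → N.Lyap α p.1 p.2 ≤ N.Lyap α p'.1 p'.2

/-- the lifting map `Δ`: the unique optimal solution of `bALGD(n,q)`. -/
noncomputable def lift (α : ℝ) (p : (F → ℝ) × (E → ℝ)) : (F → ℝ) × (E → ℝ) :=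
  letI := Classical.dec (∃! p', N.bALGDOpt α p.1 p.2 p')
  if h : ∃! p', N.bALGDOpt α p.1 p.2 p' then h.choose else p

/-- the effective cost `c*(n,q)`. -/
noncomputable def effCost (n : F → ℝ) (q : E → ℝ) : ℝ :=
  sInf { v | ∃ p : (F → ℝ) × (E → ℝ), N.bALGDFeas n q p ∧ v = N.cost p.1 p.2 }

/-- the balance factor `γ(ρ)`. -/
noncomputable def balance : ℝ :=
  sInf { v | ∃ (n : F → ℝ) (q : E → ℝ) (p : (F → ℝ) × (E → ℝ)),
    (∀ f, 0 ≤ n f) ∧ (∀ e, 0 ≤ q e) ∧ N.bALGDFeas n q p ∧ N.cost n q = 1 ∧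
    v = N.cost p.1 p.2 }

/-- the scheduling capacity region `Λ`. -/
def LamSet : Set (E → ℝ) :=
  { l | (∀ e, 0 ≤ l e) ∧ ∃ s : (E → ℝ) → ℝ, (∀ σ, 0 ≤ s σ) ∧
    (∀ e, l e ≤ N.PiV s e) ∧ ∑ σ ∈ N.S, s σ ≤ 1 }

end Network

/-- ℓ1-distance between two states. -/
noncomputable def dist1 {E F : Type*} [Fintype E] [Fintype F]
    (p p' : (F → ℝ) × (E → ℝ)) : ℝ :=
  ∑ f, |p.1 f - p'.1 f| + ∑ e, |p.2 e - p'.2 e|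

/-- A fluid model solution on `[0,T]` (algorithm-independent equations (F1)-(F8)). -/
structure FMS {E F : Type*} [Fintype E] [Fintype F] [DecidableEq E]
    (N : Network E F) (T : ℝ) where
  q : ℝ → E → ℝ
  z : ℝ → E → ℝ
  n : ℝ → F → ℝ
  s : ℝ → (E → ℝ) → ℝ
  xbar : ℝ → F → ℝ
  fa : ℝ → F → ℝ
  d : ℝ → F → ℝ
  a : ℝ → F → ℝ
  lip_q : ∀ e, ∃ K : NNReal, LipschitzOnWith K (fun t => q t e) (Set.Icc 0 T)
  lip_z : ∀ e, ∃ K : NNReal, LipschitzOnWith K (fun t => z t e) (Set.Icc 0 T)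
  lip_n : ∀ f, ∃ K : NNReal, LipschitzOnWith K (fun t => n t f) (Set.Icc 0 T)
  lip_s : ∀ σ, ∃ K : NNReal, LipschitzOnWith K (fun t => s t σ) (Set.Icc 0 T)
  lip_xbar : ∀ f, ∃ K : NNReal, LipschitzOnWith K (fun t => xbar t f) (Set.Icc 0 T)
  lip_fa : ∀ f, ∃ K : NNReal, LipschitzOnWith K (fun t => fa t f) (Set.Icc 0 T)
  lip_d : ∀ f, ∃ K : NNReal, LipschitzOnWith K (fun t => d t f) (Set.Icc 0 T)
  lip_a : ∀ f, ∃ K : NNReal, LipschitzOnWith K (fun t => a t f) (Set.Icc 0 T)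
  nonneg_q : ∀ t ∈ Set.Icc 0 T, ∀ e, 0 ≤ q t e
  nonneg_z : ∀ t ∈ Set.Icc 0 T, ∀ e, 0 ≤ z t e
  nonneg_n : ∀ t ∈ Set.Icc 0 T, ∀ f, 0 ≤ n t f
  nonneg_s : ∀ t ∈ Set.Icc 0 T, ∀ σ, 0 ≤ s t σ
  supp_s : ∀ t ∈ Set.Icc 0 T, ∀ σ ∉ N.S, s t σ = 0
  nonneg_xbar : ∀ t ∈ Set.Icc 0 T, ∀ f, 0 ≤ xbar t f
  nonneg_fa : ∀ t ∈ Set.Icc 0 T, ∀ f, 0 ≤ fa t f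
  nonneg_d : ∀ t ∈ Set.Icc 0 T, ∀ f, 0 ≤ d t f
  nonneg_a : ∀ t ∈ Set.Icc 0 T, ∀ f, 0 ≤ a t f
  eq_n : ∀ t ∈ Set.Icc 0 T, ∀ f, n t f = n 0 f + fa t f - d t f
  eq_fa : ∀ t ∈ Set.Icc 0 T, ∀ f, fa t f = N.ν f * t
  eq_d : ∀ t ∈ Set.Icc 0 T, ∀ f, d t f = N.μ f * xbar t f
  eq_q : ∀ t ∈ Set.Icc 0 T, ∀ e, q t e = q 0 e
      - ((1 - N.R.transpose) *ᵥ N.PiV (s t)) e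
      + ((1 - N.R.transpose) *ᵥ z t) e
      + (N.Gam *ᵥ a t) e
  eq_a : ∀ t ∈ Set.Icc 0 T, ∀ f, a t f = xbar t f
  eq_s : ∀ t ∈ Set.Icc 0 T, ∑ σ ∈ N.S, s t σ = t
  mono_z : ∀ t₁ ∈ Set.Icc 0 T, ∀ t₂ ∈ Set.Icc 0 T, t₁ ≤ t₂ → ∀ e, z t₁ e ≤ z t₂ e
  mono_s : ∀ t₁ ∈ Set.Icc 0 T, ∀ t₂ ∈ Set.Icc 0 T, t₁ ≤ t₂ → ∀ σ, s t₁ σ ≤ s t₂ σ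
  mono_xbar : ∀ t₁ ∈ Set.Icc 0 T, ∀ t₂ ∈ Set.Icc 0 T, t₁ ≤ t₂ → ∀ f, xbar t₁ f ≤ xbar t₂ f

namespace FMS

variable {E F : Type*} [Fintype E] [Fintype F] [DecidableEq E] {N : Network E F} {T : ℝ}

/-- a regular point: all components are differentiable at `t ∈ (0,T)`. -/
def Regular (Φ : FMS N T) (t : ℝ) : Prop :=
  t ∈ Set.Ioo 0 T ∧
  (∀ e, DifferentiableAt ℝ (fun u => Φ.q u e) t) ∧
  (∀ e, DifferentiableAt ℝ (fun u => Φ.z u e) t) ∧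
  (∀ f, DifferentiableAt ℝ (fun u => Φ.n u f) t) ∧
  (∀ σ, DifferentiableAt ℝ (fun u => Φ.s u σ) t) ∧
  (∀ f, DifferentiableAt ℝ (fun u => Φ.xbar u f) t) ∧
  (∀ f, DifferentiableAt ℝ (fun u => Φ.fa u f) t) ∧
  (∀ f, DifferentiableAt ℝ (fun u => Φ.d u f) t) ∧
  (∀ f, DifferentiableAt ℝ (fun u => Φ.a u f) t)

/-- the instantaneous rate `x_f(t) = (d/dt) x̄_f(t)`. -/
noncomputable def rate (Φ : FMS N T) (t : ℝ) (f : F) : ℝ := deriv (fun u => Φ.xbar u f) t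

/-- the α-fair objective `x^{1-α} n^α/(1-α) - q^α x`. -/
noncomputable def obj (α nf qf x : ℝ) : ℝ := x ^ (1 - α) * nf ^ α / (1 - α) - qf ^ α * x

/-- the MWUM-α conditions (F9)-(F12). -/
def IsMWUM (Φ : FMS N T) (α : ℝ) : Prop :=
  (∀ t ∈ Set.Icc (0 : ℝ) T, ∀ e, Φ.z t e = 0) ∧
  ∀ t, Φ.Regular t →
    ((∀ f, (0 < Φ.n t f →
        Φ.rate t f ∈ Set.Icc (0 : ℝ) N.C ∧
        ∀ y ∈ Set.Icc (0 : ℝ) N.C,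
          obj α (Φ.n t f) (Φ.q t (N.iota f)) y ≤
            obj α (Φ.n t f) (Φ.q t (N.iota f)) (Φ.rate t f)) ∧
      (Φ.n t f = 0 → Φ.rate t f = N.rho f)) ∧
    (∀ π ∈ N.S, N.weight α (Φ.q t) π < N.maxWeight α (Φ.q t) →
        deriv (fun u => Φ.s u π) t = 0) ∧
    (∀ f, Φ.n t f = 0 → Φ.q t (N.iota f) = 0))

end FMS

/-! At a fixed point of the lifting map, `(n*, q*)` is itself the minimiser of `L_α` over the
feasible set of `bALGD(n*, q*)`; that problem has exactly one solution because `L_α` is strictly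
convex and coercive on the nonnegative orthant, which is what makes the fixed-point equation
informative. In the coordinates `y = (n / μ, q)` the cost is `∑ yᵢ` and `L_α` is the weighted
power sum `∑ cᵢ^α yᵢ^(1+α)` with `c = (μ² / ν, 1)`. The power-mean inequality and
`∑ yᵢ^(1+α) ≤ (∑ yᵢ)^(1+α)` compare the two up to the factor `(|ℱ ⊕ ℰ| max c / min c)^α`, so
`L_α(n*, q*) ≤ L_α(p)` forces `c(n*, q*) ≤ K^α c(p)` for every feasible `p`; take
`β(α) = K^α - 1`. -/

section WeightedPowerSum

variable {ι : Type*} [Fintype ι]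

theorem strictConvexOn_sum_mul_rpow {w : ι → ℝ} (hw : ∀ i, 0 < w i) {p : ℝ} (hp : 1 < p) :
    StrictConvexOn ℝ (Set.Ici 0) fun x : ι → ℝ => ∑ i, w i * x i ^ p := by
  refine ⟨convex_Ici 0, fun x hx y hy hxy a b ha hb hab => ?_⟩
  obtain ⟨i₀, hi₀⟩ := Function.ne_iff.1 hxy
  have hrpow := strictConvexOn_rpow hp
  simp only [Pi.add_apply, Pi.smul_apply, smul_eq_mul, Finset.mul_sum, ← Finset.sum_add_distrib]
  refine Finset.sum_lt_sum (fun i _ => ?_) ⟨i₀, Finset.mem_univ _, ?_⟩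
  · have := hrpow.convexOn.2 (Set.mem_Ici.2 (hx i)) (Set.mem_Ici.2 (hy i)) ha.le hb.le hab
    simp only [smul_eq_mul] at this
    nlinarith [hw i]
  · have := hrpow.2 (Set.mem_Ici.2 (hx i₀)) (Set.mem_Ici.2 (hy i₀)) hi₀ ha hb hab
    simp only [smul_eq_mul] at this
    nlinarith [hw i₀]

theorem continuous_sum_mul_rpow (w : ι → ℝ) {p : ℝ} (hp : 0 < p) :
    Continuous fun x : ι → ℝ => ∑ i, w i * x i ^ p :=
  continuous_finsetSum _ fun i _ =>
    continuous_const.mul ((continuous_apply i).rpow_const fun _ => Or.inr hp.le)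

theorem isCompact_nonneg_sum_mul_rpow_le {w : ι → ℝ} (hw : ∀ i, 0 < w i) {p : ℝ} (hp : 1 ≤ p)
    (B : ℝ) : IsCompact {x : ι → ℝ | 0 ≤ x ∧ ∑ i, w i * x i ^ p ≤ B} := by
  have hclosed : IsClosed {x : ι → ℝ | 0 ≤ x ∧ ∑ i, w i * x i ^ p ≤ B} :=
    (isClosed_le continuous_const continuous_id).inter
      (isClosed_le (continuous_sum_mul_rpow w (by linarith)) continuous_const)
  refine (isCompact_Icc (a := 0) (b := fun i => max 1 (B / w i))).of_isClosed_subset hclosed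
    fun x ⟨hx, hxB⟩ => ⟨hx, fun i => ?_⟩
  have hterm : w i * x i ^ p ≤ B := (Finset.single_le_sum (fun j _ =>
    mul_nonneg (hw j).le (Real.rpow_nonneg (hx j) p)) (Finset.mem_univ i)).trans hxB
  show x i ≤ max 1 (B / w i)
  rcases le_total (x i) 1 with h | h
  · exact h.trans (le_max_left _ _)
  · refine le_max_of_le_right ((Real.self_le_rpow_of_one_le h hp).trans ?_)
    rw [le_div_iff₀ (hw i)]
    linarith

end WeightedPowerSum

theorem StrictConvexOn.comp_linearMap {𝕜 E F β : Type*} [Semiring 𝕜] [PartialOrder 𝕜]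
    [AddCommMonoid E] [AddCommMonoid F] [AddCommMonoid β] [PartialOrder β] [Module 𝕜 E]
    [Module 𝕜 F] [SMul 𝕜 β] {f : F → β} {s : Set F} (hf : StrictConvexOn 𝕜 s f)
    (g : E →ₗ[𝕜] F) (hg : Function.Injective g) : StrictConvexOn 𝕜 (g ⁻¹' s) (f ∘ g) :=
  ⟨hf.1.linear_preimage g, fun x hx y hy hxy a b ha hb hab => by
    simpa using hf.2 hx hy (hg.ne hxy) ha hb hab⟩

theorem StrictConvexOn.existsUnique_isMinOn {X : Type*} [TopologicalSpace X] [AddCommGroup X]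
    [Module ℝ X] {f : X → ℝ} {s : Set X} {x₀ : X} (hf : StrictConvexOn ℝ s f)
    (hcont : ContinuousOn f s) (hx₀ : x₀ ∈ s) (hsub : IsCompact (s ∩ {x | f x ≤ f x₀})) :
    ∃! x, x ∈ s ∧ IsMinOn f s x := by
  obtain ⟨x, ⟨hxs, hxle⟩, hmin⟩ := hsub.exists_isMinOn ⟨x₀, hx₀, le_refl (f x₀)⟩
    (hcont.mono Set.inter_subset_left)
  have hxmin : IsMinOn f s x := fun y hy => by
    rcases le_total (f y) (f x₀) with h | h
    · exact hmin ⟨hy, h⟩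
    · exact le_trans hxle h
  exact ⟨x, ⟨hxs, hxmin⟩, fun y ⟨hys, hymin⟩ => hf.eq_of_isMinOn hymin hxmin hys hxs⟩

section PowerSumComparison

variable {ι : Type*} [Fintype ι]

theorem sum_rpow_one_add_le_rpow_sum {y : ι → ℝ} (hy : 0 ≤ y) {α : ℝ} (hα : 0 ≤ α) :
    ∑ i, y i ^ (1 + α) ≤ (∑ i, y i) ^ (1 + α) := by
  have h1α : 1 + α ≠ 0 := by linarith
  have hS : 0 ≤ ∑ i, y i := Finset.sum_nonneg fun i _ => hy i
  calc ∑ i, y i ^ (1 + α) = ∑ i, y i * y i ^ α :=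
        Finset.sum_congr rfl fun i _ => Real.rpow_one_add' (hy i) h1α
    _ ≤ ∑ i, y i * (∑ j, y j) ^ α := Finset.sum_le_sum fun i _ =>
        mul_le_mul_of_nonneg_left (Real.rpow_le_rpow (hy i)
          (Finset.single_le_sum (fun j _ => hy j) (Finset.mem_univ i)) hα) (hy i)
    _ = (∑ i, y i) ^ (1 + α) := by rw [← Finset.sum_mul, Real.rpow_one_add' hS h1α]

theorem sum_le_rpow_mul_sum_of_sum_rpow_mul_rpow_le {c y y' : ι → ℝ} {α a b K : ℝ}
    (hα : 0 < α) (ha : 0 < a) (hab : a ≤ b) (hc : ∀ i, c i ∈ Set.Icc a b) (hK₁ : 1 ≤ K)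
    (hK : Fintype.card ι * b / a ≤ K) (hy : 0 ≤ y) (hy' : 0 ≤ y')
    (h : ∑ i, c i ^ α * y i ^ (1 + α) ≤ ∑ i, c i ^ α * y' i ^ (1 + α)) :
    ∑ i, y i ≤ K ^ α * ∑ i, y' i := by
  set m : ℝ := (Fintype.card ι : ℝ)
  set S := ∑ i, y i
  set S' := ∑ i, y' i
  have hS : 0 ≤ S := Finset.sum_nonneg fun i _ => hy i
  have hS' : 0 ≤ S' := Finset.sum_nonneg fun i _ => hy' i
  have hb : 0 < b := ha.trans_le hab
  have lower : a ^ α * S ^ (1 + α) ≤ m ^ α * ∑ i, c i ^ α * y i ^ (1 + α) := by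
    have hmean := Real.rpow_sum_le_const_mul_sum_rpow_of_nonneg (s := Finset.univ)
      (f := y) (p := 1 + α) (by linarith) fun i _ => hy i
    rw [Finset.card_univ, add_sub_cancel_left] at hmean
    calc a ^ α * S ^ (1 + α) ≤ a ^ α * (m ^ α * ∑ i, y i ^ (1 + α)) :=
          mul_le_mul_of_nonneg_left hmean (by positivity)
      _ = m ^ α * ∑ i, a ^ α * y i ^ (1 + α) := by
          rw [Finset.mul_sum, Finset.mul_sum, Finset.mul_sum]
          exact Finset.sum_congr rfl fun i _ => by ring
      _ ≤ m ^ α * ∑ i, c i ^ α * y i ^ (1 + α) := by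
          gcongr with i
          · exact Real.rpow_nonneg (hy i) _
          · exact (hc i).1
  have upper : ∑ i, c i ^ α * y' i ^ (1 + α) ≤ b ^ α * S' ^ (1 + α) :=
    calc ∑ i, c i ^ α * y' i ^ (1 + α) ≤ ∑ i, b ^ α * y' i ^ (1 + α) := by
          gcongr with i
          · exact Real.rpow_nonneg (hy' i) _
          · exact ha.le.trans (hc i).1
          · exact (hc i).2
      _ ≤ b ^ α * S' ^ (1 + α) := by
          rw [← Finset.mul_sum]
          exact mul_le_mul_of_nonneg_left (sum_rpow_one_add_le_rpow_sum hy' hα.le) (by positivity)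
  have hm : 0 ≤ m := Nat.cast_nonneg _
  have hSK : S ^ (1 + α) ≤ K ^ α * S' ^ (1 + α) := by
    refine le_of_mul_le_mul_left ?_ (Real.rpow_pos_of_pos ha α)
    calc a ^ α * S ^ (1 + α) ≤ m ^ α * ∑ i, c i ^ α * y' i ^ (1 + α) :=
          lower.trans (mul_le_mul_of_nonneg_left h (Real.rpow_nonneg hm α))
      _ ≤ m ^ α * (b ^ α * S' ^ (1 + α)) := mul_le_mul_of_nonneg_left upper (Real.rpow_nonneg hm α)
      _ = a ^ α * ((m * b / a) ^ α * S' ^ (1 + α)) := by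
          rw [Real.div_rpow (by positivity) ha.le, Real.mul_rpow hm hb.le]
          field_simp
      _ ≤ a ^ α * (K ^ α * S' ^ (1 + α)) := by gcongr
  have key : S ^ (1 + α) ≤ (K ^ α * S') ^ (1 + α) :=
    calc S ^ (1 + α) ≤ K ^ α * S' ^ (1 + α) := hSK
      _ ≤ K ^ (α * (1 + α)) * S' ^ (1 + α) := by
          gcongr
          nlinarith
      _ = (K ^ α * S') ^ (1 + α) := by
          rw [Real.mul_rpow (by positivity) hS', ← Real.rpow_mul (by positivity)]
  exact (Real.rpow_le_rpow_iff hS (by positivity) (by linarith)).1 key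

theorem mem_Icc_inv_one_add_sum_inv {x : ι → ℝ} (hx : ∀ i, 0 < x i) (i : ι) :
    x i ∈ Set.Icc (1 + ∑ j, (x j)⁻¹)⁻¹ (1 + ∑ j, x j) := by
  have hsum : ∀ y : ι → ℝ, (∀ j, 0 < y j) → y i ≤ 1 + ∑ j, y j := fun y hy =>
    (Finset.single_le_sum (fun j _ => (hy j).le) (Finset.mem_univ i)).trans
      (le_add_of_nonneg_left zero_le_one)
  exact ⟨inv_le_of_inv_le₀ (hx i) (hsum _ fun j => inv_pos.2 (hx j)), hsum x hx⟩

theorem one_mem_Icc_inv_one_add_sum_inv {x : ι → ℝ} (hx : ∀ i, 0 ≤ x i) :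
    (1 : ℝ) ∈ Set.Icc (1 + ∑ j, (x j)⁻¹)⁻¹ (1 + ∑ j, x j) :=
  ⟨inv_le_one_of_one_le₀ <| le_add_of_nonneg_right <|
      Finset.sum_nonneg fun j _ => inv_nonneg.2 (hx j),
    le_add_of_nonneg_right <| Finset.sum_nonneg fun j _ => hx j⟩

end PowerSumComparison

namespace Network

noncomputable def stateEquiv (F E : Type*) [Fintype E] [Fintype F] :
    ((F → ℝ) × (E → ℝ)) ≃L[ℝ] (F ⊕ E → ℝ) :=
  (LinearEquiv.sumArrowLequivProdArrow F E ℝ ℝ).symm.toContinuousLinearEquiv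

section State

variable {E F : Type*} [Fintype E] [Fintype F]

theorem stateEquiv_apply (p : (F → ℝ) × (E → ℝ)) : stateEquiv F E p = Sum.elim p.1 p.2 := by
  ext (f | e) <;> rfl

theorem stateEquiv_nonneg_iff {p : (F → ℝ) × (E → ℝ)} :
    0 ≤ stateEquiv F E p ↔ (∀ f, 0 ≤ p.1 f) ∧ ∀ e, 0 ≤ p.2 e := by
  simp [stateEquiv_apply, Pi.le_def]

end State

variable {E F : Type*} [Fintype E] [Fintype F] [DecidableEq E] (N : Network E F)

theorem Lyap_eq_sum_stateEquiv (α : ℝ) (p : (F → ℝ) × (E → ℝ)) :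
    N.Lyap α p.1 p.2 = ∑ i, Sum.elim (fun f => (N.μ f * N.rho f ^ α)⁻¹) 1 i *
      stateEquiv F E p i ^ (1 + α) := by
  simp [Lyap, stateEquiv_apply, Fintype.sum_sum_type, div_eq_inv_mul]

theorem isLinearMap_workload (ζ : E → ℝ) :
    IsLinearMap ℝ fun p : (F → ℝ) × (E → ℝ) => N.workload ζ p.1 p.2 where
  map_add p p' := by
    have hscale : (fun f => (p + p').1 f / N.μ f) =
        (fun f => p.1 f / N.μ f) + fun f => p'.1 f / N.μ f := funext fun f => add_div _ _ _
    simp only [workload, hscale, Prod.snd_add, mulVec_add, add_add_add_comm,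
      Pi.add_apply, mul_add, Finset.sum_add_distrib]
  map_smul c p := by
    have hscale : (fun f => (c • p).1 f / N.μ f) = c • fun f => p.1 f / N.μ f :=
      funext fun f => mul_div_assoc _ _ _
    simp only [workload, hscale, Prod.smul_snd, mulVec_smul, ← smul_add,
      Pi.smul_apply, smul_eq_mul, Finset.mul_sum, mul_left_comm]

theorem setOf_bALGDFeas_eq (n : F → ℝ) (q : E → ℝ) :
    {p | N.bALGDFeas n q p} = stateEquiv F E ⁻¹' Set.Ici 0 ∩
      ⋂ ζ ∈ N.CRstar, {p | N.workload ζ n q ≤ N.workload ζ p.1 p.2} := by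
  ext p
  simp [bALGDFeas, stateEquiv_nonneg_iff, and_assoc]

theorem convex_setOf_bALGDFeas (n : F → ℝ) (q : E → ℝ) : Convex ℝ {p | N.bALGDFeas n q p} := by
  rw [setOf_bALGDFeas_eq]
  exact ((convex_Ici 0).linear_preimage (stateEquiv F E).toLinearMap).inter
    (convex_iInter₂ fun ζ _ => convex_halfSpace_ge (N.isLinearMap_workload ζ) _)

theorem isClosed_setOf_bALGDFeas (n : F → ℝ) (q : E → ℝ) :
    IsClosed {p | N.bALGDFeas n q p} := by
  rw [setOf_bALGDFeas_eq]
  exact (isClosed_Ici.preimage (stateEquiv F E).continuous).inter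
    (isClosed_biInter fun ζ _ => isClosed_le continuous_const
      ((N.isLinearMap_workload ζ).mk' _).continuous_of_finiteDimensional)

theorem bALGDOpt_iff {α : ℝ} {n : F → ℝ} {q : E → ℝ} {p : (F → ℝ) × (E → ℝ)} :
    N.bALGDOpt α n q p ↔ p ∈ {p | N.bALGDFeas n q p} ∧
      IsMinOn (fun p => N.Lyap α p.1 p.2) {p | N.bALGDFeas n q p} p :=
  Iff.rfl

theorem existsUnique_bALGDOpt {α : ℝ} (hα : 0 < α) {n : F → ℝ} {q : E → ℝ}
    (hn : ∀ f, 0 ≤ n f) (hq : ∀ e, 0 ≤ q e) : ∃! p, N.bALGDOpt α n q p := by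
  set s := {p | N.bALGDFeas n q p}
  set w : F ⊕ E → ℝ := Sum.elim (fun f => (N.μ f * N.rho f ^ α)⁻¹) 1
  set Φ : (F ⊕ E → ℝ) → ℝ := fun x => ∑ i, w i * x i ^ (1 + α)
  have hw : ∀ i, 0 < w i := by
    rintro (f | e)
    · have := N.hμ0 f
      have := N.hν f
      simp only [w, Sum.elim_inl, rho]
      positivity
    · exact one_pos
  have hLyap : (fun p : (F → ℝ) × (E → ℝ) => N.Lyap α p.1 p.2) = Φ ∘ stateEquiv F E :=
    funext (N.Lyap_eq_sum_stateEquiv α)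
  have hΦ : Continuous (Φ ∘ stateEquiv F E) :=
    (continuous_sum_mul_rpow w (by linarith)).comp (stateEquiv F E).continuous
  have hs_nonneg : s ⊆ stateEquiv F E ⁻¹' Set.Ici 0 := fun p hp =>
    stateEquiv_nonneg_iff.2 ⟨hp.1, hp.2.1⟩
  have hmem : (n, q) ∈ s := ⟨hn, hq, fun ζ _ => le_rfl⟩
  have hconvex : StrictConvexOn ℝ s (Φ ∘ stateEquiv F E) :=
    ((strictConvexOn_sum_mul_rpow hw (by linarith)).comp_linearMap (stateEquiv F E).toLinearMap
      (stateEquiv F E).injective).subset hs_nonneg (N.convex_setOf_bALGDFeas n q)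
  have hcompact : IsCompact (s ∩ {p | (Φ ∘ stateEquiv F E) p ≤ Φ (stateEquiv F E (n, q))}) :=
    ((stateEquiv F E).toHomeomorph.isCompact_preimage.2 (isCompact_nonneg_sum_mul_rpow_le hw
      (p := 1 + α) (by linarith) _)).of_isClosed_subset
      ((N.isClosed_setOf_bALGDFeas n q).inter (isClosed_le hΦ continuous_const))
      fun p ⟨hp, hpΦ⟩ => ⟨hs_nonneg hp, hpΦ⟩
  simp only [bALGDOpt_iff, hLyap]
  exact hconvex.existsUnique_isMinOn hΦ.continuousOn hmem hcompact

/-- `lift` leaves its argument unchanged when `bALGD` has no unique optimum, so a fixed point is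
informative only through `existsUnique_bALGDOpt`. -/
theorem bALGDOpt_of_lift_eq {α : ℝ} (hα : 0 < α) {n : F → ℝ} {q : E → ℝ}
    (hn : ∀ f, 0 ≤ n f) (hq : ∀ e, 0 ≤ q e) (hfix : N.lift α (n, q) = (n, q)) :
    N.bALGDOpt α n q (n, q) := by
  have hunique := N.existsUnique_bALGDOpt hα hn hq
  rw [lift, dif_pos hunique] at hfix
  exact hfix ▸ hunique.choose_spec.1

theorem cost_eq_sum (n : F → ℝ) (q : E → ℝ) :
    N.cost n q = ∑ i, Sum.elim (fun f => n f / N.μ f) q i := by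
  simp [cost, Fintype.sum_sum_type]

theorem Lyap_eq_sum_rpow_mul_rpow (α : ℝ) {n : F → ℝ} (hn : ∀ f, 0 ≤ n f) (q : E → ℝ) :
    N.Lyap α n q = ∑ i, Sum.elim (fun f => N.μ f ^ 2 / N.ν f) 1 i ^ α *
      Sum.elim (fun f => n f / N.μ f) q i ^ (1 + α) := by
  simp only [Lyap, Fintype.sum_sum_type, Sum.elim_inl, Sum.elim_inr, Pi.one_apply,
    Real.one_rpow, one_mul]
  congr 1
  refine Finset.sum_congr rfl fun f _ => ?_
  have hμ := N.hμ0 f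
  have hν := N.hν f
  have hμα := Real.rpow_pos_of_pos hμ α
  have hνα := Real.rpow_pos_of_pos hν α
  rw [rho, Real.div_rpow (by positivity) hν.le, ← Real.rpow_pow_comm hμ.le,
    Real.div_rpow (hn f) hμ.le, Real.div_rpow hν.le hμ.le, Real.rpow_add hμ, Real.rpow_one]
  field_simp

theorem cost_le_rpow_mul_cost_of_Lyap_le {α a b K : ℝ} (hα : 0 < α) (ha : 0 < a)
    (hweight : ∀ f, N.μ f ^ 2 / N.ν f ∈ Set.Icc a b) (hone : (1 : ℝ) ∈ Set.Icc a b)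
    (hK₁ : 1 ≤ K) (hK : Fintype.card (F ⊕ E) * b / a ≤ K)
    {n n' : F → ℝ} {q q' : E → ℝ} (hn : ∀ f, 0 ≤ n f) (hq : ∀ e, 0 ≤ q e)
    (hn' : ∀ f, 0 ≤ n' f) (hq' : ∀ e, 0 ≤ q' e) (h : N.Lyap α n q ≤ N.Lyap α n' q') :
    N.cost n q ≤ K ^ α * N.cost n' q' := by
  have hscaled_nonneg : ∀ {n : F → ℝ} {q : E → ℝ}, (∀ f, 0 ≤ n f) → (∀ e, 0 ≤ q e) →
      0 ≤ Sum.elim (fun f => n f / N.μ f) q := fun hn hq => by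
    rintro (f | e)
    · exact div_nonneg (hn f) (N.hμ0 f).le
    · exact hq e
  rw [N.Lyap_eq_sum_rpow_mul_rpow α hn, N.Lyap_eq_sum_rpow_mul_rpow α hn'] at h
  rw [cost_eq_sum, cost_eq_sum]
  refine sum_le_rpow_mul_sum_of_sum_rpow_mul_rpow_le hα ha (hone.1.trans hone.2) ?_ hK₁ hK
    (hscaled_nonneg hn hq) (hscaled_nonneg hn' hq') h
  rintro (f | e)
  exacts [hweight f, hone]

theorem cost_le_rpow_mul_effCost_of_bALGDOpt {α a b K : ℝ} (hα : 0 < α) (ha : 0 < a)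
    (hweight : ∀ f, N.μ f ^ 2 / N.ν f ∈ Set.Icc a b) (hone : (1 : ℝ) ∈ Set.Icc a b)
    (hK₁ : 1 ≤ K) (hK : Fintype.card (F ⊕ E) * b / a ≤ K) {n : F → ℝ} {q : E → ℝ}
    (hopt : N.bALGDOpt α n q (n, q)) : N.cost n q ≤ K ^ α * N.effCost n q := by
  have hKα : 0 < K ^ α := Real.rpow_pos_of_pos (by linarith) α
  rw [← div_le_iff₀' hKα]
  refine le_csInf ⟨_, (n, q), hopt.1, rfl⟩ ?_
  rintro _ ⟨p, hp, rfl⟩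
  rw [div_le_iff₀' hKα]
  exact N.cost_le_rpow_mul_cost_of_Lyap_le hα ha hweight hone hK₁ hK hopt.1.1 hopt.1.2.1
    hp.1 hp.2.1 (hopt.2 p hp)

end Network

theorem invariant_state_near_optimal_general
    {E F : Type*} [Fintype E] [Fintype F] [DecidableEq E]
    (μ ν : F → ℝ) (hμ0 : ∀ f, 0 < μ f) (hν : ∀ f, 0 < ν f) :
    ∃ β : ℝ → ℝ, (∀ α, 0 ≤ β α) ∧
      Filter.Tendsto β (nhdsWithin 0 (Set.Ioi 0)) (nhds 0) ∧
      ∀ N : Network E F, N.μ = μ → N.ν = ν → N.Leff = 1 →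
        ∀ α : ℝ, 0 < α → α ≠ 1 →
        ∀ (nstar : F → ℝ) (qstar : E → ℝ),
          (∀ f, 0 ≤ nstar f) → (∀ e, 0 ≤ qstar e) →
          N.lift α (nstar, qstar) = (nstar, qstar) →
          N.cost nstar qstar ≤ (1 + β α) * N.effCost nstar qstar := by
  set c : F → ℝ := fun f => μ f ^ 2 / ν f
  have hc : ∀ f, 0 < c f := fun f => by have := hμ0 f; have := hν f; positivity
  set a := (1 + ∑ f, (c f)⁻¹)⁻¹
  set b := 1 + ∑ f, c f
  set K := max 1 (Fintype.card (F ⊕ E) * b / a)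
  have ha : 0 < a := inv_pos.2 <|
    add_pos_of_pos_of_nonneg one_pos <| Finset.sum_nonneg fun f _ => (inv_pos.2 (hc f)).le
  have hK₁ : 1 ≤ K := le_max_left _ _
  refine ⟨fun α => K ^ |α| - 1, fun α => sub_nonneg.2 (Real.one_le_rpow hK₁ (abs_nonneg α)), ?_,
    ?_⟩
  · have hcont : Continuous fun α : ℝ => K ^ |α| - 1 :=
      ((Real.continuous_const_rpow (by linarith)).comp continuous_abs).sub continuous_const
    simpa using (hcont.tendsto 0).mono_left nhdsWithin_le_nhds
  · rintro N rfl rfl - α hα - n q hn hq hfix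
    dsimp only
    rw [abs_of_pos hα, add_sub_cancel]
    exact N.cost_le_rpow_mul_effCost_of_bALGDOpt hα ha (mem_Icc_inv_one_add_sum_inv hc)
      (one_mem_Icc_inv_one_add_sum_inv fun f => (hc f).le) hK₁ (le_max_right _ _)
      (N.bALGDOpt_of_lift_eq hα hn hq hfix)

/-- Near-optimality of invariant states: there is a function
`β(α) → 0` as `α → 0⁺`, depending only on `μ`, `ν`, `|E|`, `|F|`, such that for
every critically loaded network with these parameters, every `α ∈ (0,∞)∖{1}`,
and every fixed point `(n*,q*)` of the lifting map,
`c(n*,q*) ≤ (1 + β(α)) c*(n*,q*)`. -/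
theorem invariant_state_near_optimal
    {E F : Type*} [Fintype E] [Fintype F] [DecidableEq E]
    (μ ν : F → ℝ) (hμ0 : ∀ f, 0 < μ f) (hμ1 : ∀ f, μ f < 1) (hν : ∀ f, 0 < ν f) :
    ∃ β : ℝ → ℝ, (∀ α, 0 ≤ β α) ∧
      Filter.Tendsto β (nhdsWithin 0 (Set.Ioi 0)) (nhds 0) ∧
      ∀ N : Network E F, N.μ = μ → N.ν = ν → N.Leff = 1 →
        ∀ α : ℝ, 0 < α → α ≠ 1 →
        ∀ (nstar : F → ℝ) (qstar : E → ℝ),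
          (∀ f, 0 ≤ nstar f) → (∀ e, 0 ≤ qstar e) →
          N.lift α (nstar, qstar) = (nstar, qstar) →
          N.cost nstar qstar ≤ (1 + β α) * N.effCost nstar qstar :=
  invariant_state_near_optimal_general μ ν hμ0 hν
end

section
/- Suppose the system is critically loaded (Leff(ρ) = 1) and that the set CR*(ρ) of extreme critical virtual resources is a singleton {ζ}; let v := Ξᵀζ ∈ ℝ₊^ℰ (note v ≠ 0). Then the balance factor satisfies γ(ρ) = (min_{e∈ℰ} v_e)/(max_{e∈ℰ} v_e). -/
open Matrix Filter

/-!
With `v = Ξᵀζ` the workload is `w_ζ(n,q) = Σ_e v_e q_e + Σ_f v_{ι(f)} n_f/μ_f`, i.e. the cost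
`c(n,q)` with the unit weights replaced by the `v_e ≥ 0`, so `(min v) c ≤ w_ζ ≤ (max v) c` on
nonnegative states. A feasible lift `(n',q')` of a unit-cost state therefore has
`min v ≤ w_ζ(n',q') ≤ (max v) c(n',q')`. When `CR*(ρ) = {ζ}` the workload of `ζ` is the only
constraint, and one unit of work at a queue minimising `v` is lifted by `min v / max v` units at a
queue maximising `v`, which attains the bound.
-/

open Finset

namespace Matrix

variable {m n α : Type*} [Fintype n]

theorem mulVec_apply_nonneg [Semiring α] [PartialOrder α] [IsOrderedRing α] {A : Matrix m n α}
    (hA : ∀ i j, 0 ≤ A i j) {x : n → α} (hx : ∀ j, 0 ≤ x j) (i : m) : 0 ≤ (A *ᵥ x) i :=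
  sum_nonneg fun j _ => mul_nonneg (hA i j) (hx j)

variable [DecidableEq n] [CommRing α]

theorem inv_one_sub_eq_sum_pow {A : Matrix n n α} {k : ℕ} (hA : A ^ k = 0) :
    (1 - A)⁻¹ = ∑ i ∈ range k, A ^ i :=
  inv_eq_right_inv (by rw [mul_neg_geom_sum, hA, sub_zero])

theorem inv_one_sub_apply_nonneg [PartialOrder α] [IsOrderedRing α] {A : Matrix n n α}
    (hA : IsNilpotent A) (hA0 : ∀ i j, 0 ≤ A i j) (i j : n) : 0 ≤ (1 - A)⁻¹ i j := by
  obtain ⟨k, hk⟩ := hA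
  rw [inv_one_sub_eq_sum_pow hk, sum_apply]
  exact sum_nonneg fun l _ => pow_apply_nonneg hA0 l i j

end Matrix

namespace Network

variable {E F : Type*} [Fintype E] [Fintype F] [DecidableEq E] (N : Network E F)

theorem Xi_apply_nonneg (e e' : E) : 0 ≤ N.Xi e e' :=
  inv_one_sub_apply_nonneg (isNilpotent_transpose_iff.2 N.hRnil)
    (fun i j => by rcases N.hR01 j i with h | h <;> simp [h]) e e'

theorem Xi_transpose_mulVec_nonneg {ζ : E → ℝ} (hζ : ∀ e, 0 ≤ ζ e) (e : E) :
    0 ≤ (N.Xiᵀ *ᵥ ζ) e :=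
  mulVec_apply_nonneg (fun i j => N.Xi_apply_nonneg j i) hζ e

theorem dotProduct_Gam_mulVec (v : E → ℝ) (y : F → ℝ) :
    v ⬝ᵥ (N.Gam *ᵥ y) = ∑ f, v (N.iota f) * y f := by
  simp only [dotProduct, mulVec, Gam, of_apply, mul_sum]
  rw [sum_comm]
  exact sum_congr rfl fun f _ => by simp

theorem workload_eq (ζ : E → ℝ) (n : F → ℝ) (q : E → ℝ) :
    N.workload ζ n q =
      ∑ e, (N.Xiᵀ *ᵥ ζ) e * q e + ∑ f, (N.Xiᵀ *ᵥ ζ) (N.iota f) * (n f / N.μ f) := by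
  change ζ ⬝ᵥ (N.Xi *ᵥ _) = _
  rw [dotProduct_mulVec, ← mulVec_transpose, dotProduct_add, dotProduct_Gam_mulVec]
  rfl

theorem cost_nonneg {n : F → ℝ} {q : E → ℝ} (hn : ∀ f, 0 ≤ n f) (hq : ∀ e, 0 ≤ q e) :
    0 ≤ N.cost n q :=
  add_nonneg (sum_nonneg fun f _ => div_nonneg (hn f) (N.hμ0 f).le) (sum_nonneg fun e _ => hq e)

variable {N} {ζ : E → ℝ} {n : F → ℝ} {q : E → ℝ}

theorem mul_cost_le_workload {a : ℝ} (ha : ∀ e, a ≤ (N.Xiᵀ *ᵥ ζ) e) (hn : ∀ f, 0 ≤ n f)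
    (hq : ∀ e, 0 ≤ q e) : a * N.cost n q ≤ N.workload ζ n q := by
  rw [workload_eq, cost, mul_add, mul_sum, mul_sum, add_comm]
  exact add_le_add (sum_le_sum fun e _ => mul_le_mul_of_nonneg_right (ha e) (hq e))
    (sum_le_sum fun f _ => mul_le_mul_of_nonneg_right (ha _) (div_nonneg (hn f) (N.hμ0 f).le))

theorem workload_le_mul_cost {b : ℝ} (hb : ∀ e, (N.Xiᵀ *ᵥ ζ) e ≤ b) (hn : ∀ f, 0 ≤ n f)
    (hq : ∀ e, 0 ≤ q e) : N.workload ζ n q ≤ b * N.cost n q := by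
  rw [workload_eq, cost, mul_add, mul_sum, mul_sum, add_comm (∑ f, b * (n f / N.μ f))]
  exact add_le_add (sum_le_sum fun e _ => mul_le_mul_of_nonneg_right (hb e) (hq e))
    (sum_le_sum fun f _ => mul_le_mul_of_nonneg_right (hb _) (div_nonneg (hn f) (N.hμ0 f).le))

theorem div_le_cost_of_bALGDFeas (hζ : ζ ∈ N.CRstar) {a b : ℝ} (ha : ∀ e, a ≤ (N.Xiᵀ *ᵥ ζ) e)
    (hb : ∀ e, (N.Xiᵀ *ᵥ ζ) e ≤ b) (hb0 : 0 ≤ b) (hn : ∀ f, 0 ≤ n f) (hq : ∀ e, 0 ≤ q e)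
    (hc : N.cost n q = 1) {p : (F → ℝ) × (E → ℝ)} (hp : N.bALGDFeas n q p) :
    a / b ≤ N.cost p.1 p.2 := by
  obtain ⟨hp₁, hp₂, hw⟩ := hp
  refine div_le_of_le_mul₀ hb0 (N.cost_nonneg hp₁ hp₂) ?_
  calc a = a * N.cost n q := by rw [hc, mul_one]
    _ ≤ N.workload ζ n q := mul_cost_le_workload ha hn hq
    _ ≤ N.workload ζ p.1 p.2 := hw ζ hζ
    _ ≤ b * N.cost p.1 p.2 := workload_le_mul_cost hb hp₁ hp₂
    _ = N.cost p.1 p.2 * b := mul_comm _ _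

theorem workload_zero_single (e : E) (c : ℝ) :
    N.workload ζ 0 (Pi.single e c) = (N.Xiᵀ *ᵥ ζ) e * c := by
  simp [workload_eq, Pi.single_apply]

theorem cost_zero_single (e : E) (c : ℝ) : N.cost 0 (Pi.single e c) = c := by
  simp [cost]

theorem bALGDFeas_zero_single (h : N.CRstar = {ζ}) {e e' : E} {c c' : ℝ} (hc' : 0 ≤ c')
    (hle : (N.Xiᵀ *ᵥ ζ) e * c ≤ (N.Xiᵀ *ᵥ ζ) e' * c') :
    N.bALGDFeas 0 (Pi.single e c) (0, Pi.single e' c') := by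
  refine ⟨fun _ => le_rfl, (Pi.single_nonneg (α := fun _ => ℝ)).2 hc', ?_⟩
  rw [h]
  rintro _ rfl
  simpa only [workload_zero_single] using hle

end Network

theorem balance_factor_single_resource_general
    {E F : Type*} [Fintype E] [Fintype F] [DecidableEq E] [Nonempty E]
    (N : Network E F)
    (ζ : E → ℝ) (hsingle : N.CRstar = {ζ}) :
    N.balance =
      (Finset.univ.inf' Finset.univ_nonempty (N.Xi.transpose *ᵥ ζ)) /
        (Finset.univ.sup' Finset.univ_nonempty (N.Xi.transpose *ᵥ ζ)) := by
  set v := N.Xiᵀ *ᵥ ζ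
  have hζ : ζ ∈ N.CRstar := hsingle ▸ rfl
  have hv : ∀ e, 0 ≤ v e := N.Xi_transpose_mulVec_nonneg (extremePoints_subset hζ).1.1
  obtain ⟨emin, -, hmin⟩ := exists_mem_eq_inf' univ_nonempty v
  obtain ⟨emax, -, hmax⟩ := exists_mem_eq_sup' univ_nonempty v
  have hle_min (e : E) : v emin ≤ v e := hmin ▸ inf'_le v (mem_univ e)
  have hle_max (e : E) : v e ≤ v emax := hmax ▸ le_sup' v (mem_univ e)
  rw [hmin, hmax]
  refine IsLeast.csInf_eq ⟨⟨0, Pi.single emin 1, (0, Pi.single emax (v emin / v emax)),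
    fun _ => le_rfl, (Pi.single_nonneg (α := fun _ => ℝ)).2 zero_le_one,
    Network.bALGDFeas_zero_single hsingle (div_nonneg (hv emin) (hv emax)) ?_,
    Network.cost_zero_single .., (Network.cost_zero_single ..).symm⟩, ?_⟩
  · rw [mul_one, mul_div_cancel_of_imp' fun h0 => le_antisymm (h0 ▸ hle_max emin) (hv emin)]
  · rintro _ ⟨n, q, p, hn, hq, hp, hc, rfl⟩
    exact Network.div_le_cost_of_bALGDFeas hζ hle_min hle_max (hv emax) hn hq hc hp

/-- If the set of extreme critical virtual resources is a
singleton `{ζ}`, then the balance factor equals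
`(min_e v_e)/(max_e v_e)` where `v = Ξᵀζ`. -/
theorem balance_factor_single_resource
    {E F : Type*} [Fintype E] [Fintype F] [DecidableEq E] [Nonempty E]
    (N : Network E F) (hcrit : N.Leff = 1)
    (ζ : E → ℝ) (hsingle : N.CRstar = {ζ})
    (hv : N.Xi.transpose *ᵥ ζ ≠ 0) :
    N.balance =
      (Finset.univ.inf' Finset.univ_nonempty (N.Xi.transpose *ᵥ ζ)) /
        (Finset.univ.sup' Finset.univ_nonempty (N.Xi.transpose *ᵥ ζ)) :=
  balance_factor_single_resource_general N ζ hsingle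
end
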